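/- arXiv:math/0201319 — 4 statements merged into one kernel-verified Lean document; each statement's English description precedes it below -/
import Mathlib

section
/- The Farey graph is connected. -/
/-- Primitive integer pairs: representatives of slopes. -/
abbrev FareyPre := {p : ℤ × ℤ // IsCoprime p.1 p.2}

/-- Two primitive pairs represent the same Farey vertex iff they agree up to sign. -/
instance fareySetoid : Setoid FareyPre where
  r a b := a.val = b.val ∨ a.val = -b.val
  iseqv := by
    refine ⟨fun a => Or.inl rfl, ?_, ?_⟩
    · intro a b h
      rcases h with h | h
      · exact Or.inl h.symm
      · exact Or.inr (by rw [h, neg_neg])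
    · intro a b c hab hbc
      rcases hab with h | h <;> rcases hbc with h' | h'
      · exact Or.inl (h.trans h')
      · exact Or.inr (h.trans h')
      · exact Or.inr (by rw [h, h'])
      · exact Or.inl (by rw [h, h', neg_neg])

/-- Vertices of the Farey graph: primitive pairs up to sign. -/
abbrev FareyV := Quotient fareySetoid

/-- Adjacency in the Farey graph: distinct vertices with representatives of
determinant `±1`. -/
def FareyAdj (u v : FareyV) : Prop :=
  u ≠ v ∧ ∃ a b : FareyPre, (⟦a⟧ : FareyV) = u ∧ (⟦b⟧ : FareyV) = v ∧
    |a.val.1 * b.val.2 - a.val.2 * b.val.1| = 1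

theorem fareyAdj_symm {u v : FareyV} (h : FareyAdj u v) : FareyAdj v u := by
  obtain ⟨hne, a, b, ha, hb, hd⟩ := h
  refine ⟨hne.symm, b, a, hb, ha, ?_⟩
  rw [show b.val.1 * a.val.2 - b.val.2 * a.val.1
      = -(a.val.1 * b.val.2 - a.val.2 * b.val.1) by ring, abs_neg]
  exact hd

/-- The Farey graph. -/
def FareyGraph : SimpleGraph FareyV where
  Adj := FareyAdj
  symm := ⟨fun _ _ h => fareyAdj_symm h⟩
  loopless := ⟨fun u h => h.1 rfl⟩

/-- The base vertex `(1,0)`. -/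
def fareyBase : FareyV := ⟦⟨(1, 0), isCoprime_one_left⟩⟧

lemma emod_bound (y q : ℤ) (hq : q ≠ 0) : 0 ≤ y % q ∧ y % q < |q| := by
  rcases lt_or_gt_of_ne hq with h | h
  · have : y % q = y % (-q) := (Int.emod_neg y q).symm ▸ rfl
    rw [show y % q = y % (-q) by simp, abs_of_neg h]
    exact ⟨Int.emod_nonneg y (by omega), Int.emod_lt_of_pos y (by omega)⟩
  · rw [abs_of_pos h]
    exact ⟨Int.emod_nonneg y (by omega), Int.emod_lt_of_pos y h⟩

lemma reach_base : ∀ n : ℕ, ∀ a : FareyPre, a.val.2.natAbs = n →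
    FareyGraph.Reachable ⟦a⟧ fareyBase := by
  intro n
  induction n using Nat.strong_induction_on with
  | _ n ih =>
    intro a hn
    obtain ⟨⟨p, q⟩, hc⟩ := a
    simp only at hn
    rcases eq_or_ne n 0 with rfl | hn0
    · -- q = 0, p = ±1
      have hq : q = 0 := by omega
      subst hq
      have hp : IsUnit p := isCoprime_zero_right.mp hc
      have : p = 1 ∨ p = -1 := Int.isUnit_iff.mp hp
      have heq : (⟦(⟨(p, 0), hc⟩ : FareyPre)⟧ : FareyV) = fareyBase := by
        apply Quotient.sound
        rcases this with rfl | rfl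
        · exact Or.inl rfl
        · exact Or.inr (by simp [Prod.ext_iff])
      rw [heq]
    · have hq : q ≠ 0 := by
        intro h; rw [h] at hn; simp at hn; omega
      obtain ⟨u, v, huv⟩ := hc
      -- u*p + v*q = 1, so p*u - q*(-v) = 1
      set y : ℤ := u with hy
      set x : ℤ := -v with hx
      have hdet : p * y - q * x = 1 := by simp only [hy, hx]; linarith
      set k : ℤ := y / q with hk
      set y' : ℤ := y % q with hy'
      set x' : ℤ := x - k * p with hx'
      have hyy : y' = y - k * q := by
        simp only [hy', hk, Int.emod_def]; ring
      have hdet' : p * y' - q * x' = 1 := by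
        rw [hyy, hx']; linarith [hdet]
      have hb : IsCoprime x' y' := ⟨-q, p, by linarith⟩
      set b : FareyPre := ⟨(x', y'), hb⟩ with hbdef
      have hbound := emod_bound y q hq
      have hlt : y'.natAbs < n := by
        have : |q| = (n : ℤ) := by
          rw [← hn]; exact Int.abs_eq_natAbs q
        omega
      have hreach : FareyGraph.Reachable ⟦b⟧ fareyBase := ih _ hlt b rfl
      refine SimpleGraph.Reachable.trans ?_ hreach
      apply SimpleGraph.Adj.reachable
      refine ⟨?_, ⟨(p, q), ⟨u, v, huv⟩⟩, b, rfl, rfl, ?_⟩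
      · intro h
        have := Quotient.exact h
        rcases this with h' | h'
        · have h1 : p = x' := congrArg Prod.fst h'
          have h2 : q = y' := congrArg Prod.snd h'
          rw [h1, h2] at hdet'
          nlinarith [hdet']
        · have h1 : p = -x' := congrArg Prod.fst h'
          have h2 : q = -y' := congrArg Prod.snd h'
          rw [h1, h2] at hdet'
          nlinarith [hdet']
      · simp only [hbdef]
        rw [show ((p, q) : ℤ × ℤ).1 * ((x', y') : ℤ × ℤ).2 -
            ((p, q) : ℤ × ℤ).2 * ((x', y') : ℤ × ℤ).1 = p * y' - q * x' by rfl, hdet']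
        rfl

/-- The Farey graph is connected. -/
theorem farey_connected : FareyGraph.Connected := by
  rw [SimpleGraph.connected_iff]
  refine ⟨?_, ⟨fareyBase⟩⟩
  intro u v
  induction u using Quotient.inductionOn with
  | h a =>
    induction v using Quotient.inductionOn with
    | h b =>
      exact (reach_base _ a rfl).trans (reach_base _ b rfl).symm
end

section
/- The Farey graph is chain-connected through triangles: any two triangles in the Farey graph can be joined by a finite sequence of triangles in which consecutive triangles share an edge. -/
/-- A triangle in the Farey graph: three pairwise adjacent vertices. -/
def IsFareyTriangle (t : Set FareyV) : Prop :=
  t.ncard = 3 ∧ ∀ a ∈ t, ∀ b ∈ t, a ≠ b → FareyGraph.Adj a b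

/-- Two triangles share an edge when they have two vertices in common. -/
def SharesEdgeStep (s t : Set FareyV) : Prop :=
  IsFareyTriangle s ∧ IsFareyTriangle t ∧ 2 ≤ (s ∩ t).ncard

namespace FareyAux

lemma int_sq_one {d : ℤ} (h : d ^ 2 = 1) : d = 1 ∨ d = -1 :=
  Int.isUnit_iff.mp (IsUnit.of_mul_eq_one (a := d) d (by linear_combination h))

open Classical in
/-- The vertex attached to an integer pair (junk value if not coprime). -/
noncomputable def fv (a : ℤ × ℤ) : FareyV :=
  if h : IsCoprime a.1 a.2 then ⟦⟨a, h⟩⟧ else ⟦⟨(1, 0), isCoprime_one_left⟩⟧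

lemma fv_mk (a : ℤ × ℤ) (h : IsCoprime a.1 a.2) : fv a = ⟦⟨a, h⟩⟧ := dif_pos h

lemma fv_eq_iff {a b : ℤ × ℤ} (ha : IsCoprime a.1 a.2) (hb : IsCoprime b.1 b.2) :
    fv a = fv b ↔ (a = b ∨ a = -b) := by
  rw [fv_mk a ha, fv_mk b hb, Quotient.eq]
  rfl

lemma fv_neg {a : ℤ × ℤ} (ha : IsCoprime a.1 a.2) : fv (-a) = fv a := by
  have ha' : IsCoprime (-a).1 (-a).2 := by
    simpa using ha.neg_neg
  rw [fv_eq_iff ha' ha]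
  exact Or.inr rfl

/-- Unimodularity of a pair of pairs. -/
def uni (a b : ℤ × ℤ) : Prop := (a.1 * b.2 - a.2 * b.1) ^ 2 = 1

lemma uni.copA {a b : ℤ × ℤ} (h : uni a b) : IsCoprime a.1 a.2 := by
  rcases int_sq_one h with h1 | h1
  · exact ⟨b.2, -b.1, by linear_combination h1⟩
  · exact ⟨-b.2, b.1, by linear_combination -h1⟩

lemma uni.symm {a b : ℤ × ℤ} (h : uni a b) : uni b a := by
  unfold uni at *; linear_combination h

lemma uni.copB {a b : ℤ × ℤ} (h : uni a b) : IsCoprime b.1 b.2 := h.symm.copA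

lemma uni.addR {a b : ℤ × ℤ} (h : uni a b) : uni a (a + b) := by
  unfold uni at *; simp only [Prod.fst_add, Prod.snd_add]; linear_combination h

lemma uni.copSum {a b : ℤ × ℤ} (h : uni a b) : IsCoprime (a + b).1 (a + b).2 :=
  h.addR.copB

lemma uni.ne {a b : ℤ × ℤ} (h : uni a b) : fv a ≠ fv b := by
  intro he
  rw [fv_eq_iff h.copA h.copB] at he
  unfold uni at h
  rcases he with he | he
  · rw [he] at h
    nlinarith [h]
  · rw [he] at h
    simp only [Prod.fst_neg, Prod.snd_neg] at h
    nlinarith [h]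

/-- The triangle spanned by a unimodular pair. -/
noncomputable def tri (a b : ℤ × ℤ) : Set FareyV := {fv a, fv b, fv (a + b)}

lemma tri_comm (a b : ℤ × ℤ) : tri a b = tri b a := by
  unfold tri
  rw [add_comm]
  ext x; simp [Set.mem_insert_iff]; tauto

lemma uni.neA {a b : ℤ × ℤ} (h : uni a b) : uni (-a) b := by
  unfold uni at *; simp only [Prod.fst_neg, Prod.snd_neg]; linear_combination h

lemma uni.neB {a b : ℤ × ℤ} (h : uni a b) : uni a (-b) := by
  unfold uni at *; simp only [Prod.fst_neg, Prod.snd_neg]; linear_combination h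

lemma adj_of_uni {a b : ℤ × ℤ} (h : uni a b) : FareyGraph.Adj (fv a) (fv b) := by
  refine ⟨h.ne, ⟨a, h.copA⟩, ⟨b, h.copB⟩, (fv_mk a h.copA).symm, (fv_mk b h.copB).symm, ?_⟩
  rcases int_sq_one h with h1 | h1 <;> rw [h1] <;> norm_num

lemma tri_isTriangle {a b : ℤ × ℤ} (h : uni a b) : IsFareyTriangle (tri a b) := by
  have hab := h.ne
  have hac := h.addR.ne
  have hbc : fv b ≠ fv (a + b) := by
    have : uni b (a + b) := by
      unfold uni at *; simp only [Prod.fst_add, Prod.snd_add]; linear_combination h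
    exact this.ne
  constructor
  · rw [show tri a b = {fv a, fv b, fv (a+b)} from rfl]
    rw [Set.ncard_insert_of_notMem (by simp [hab, hac]),
      Set.ncard_insert_of_notMem (by simp [hbc]), Set.ncard_singleton]
  · intro x hx y hy hxy
    have hba : uni b a := h.symm
    have hca : uni (a+b) a := h.addR.symm
    have hbc' : uni b (a+b) := by
      unfold uni at *; simp only [Prod.fst_add, Prod.snd_add]; linear_combination h
    have hcb : uni (a+b) b := hbc'.symm
    simp only [tri, Set.mem_insert_iff, Set.mem_singleton_iff] at hx hy
    rcases hx with rfl | rfl | rfl <;> rcases hy with rfl | rfl | rfl <;>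
      first
        | exact absurd rfl hxy
        | exact adj_of_uni h
        | exact adj_of_uni h.addR
        | exact adj_of_uni hba
        | exact adj_of_uni hca
        | exact adj_of_uni hbc'
        | exact adj_of_uni hcb

lemma step_of {a b a' b' : ℤ × ℤ} (h : uni a b) (h' : uni a' b')
    {u v : FareyV} (huv : u ≠ v)
    (hu : u ∈ tri a b) (hv : v ∈ tri a b) (hu' : u ∈ tri a' b') (hv' : v ∈ tri a' b') :
    SharesEdgeStep (tri a b) (tri a' b') := by
  refine ⟨tri_isTriangle h, tri_isTriangle h', ?_⟩
  have hsub : ({u, v} : Set FareyV) ⊆ tri a b ∩ tri a' b' := by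
    intro x hx
    rcases hx with rfl | hx
    · exact ⟨hu, hu'⟩
    · rcases hx with rfl
      exact ⟨hv, hv'⟩
  have hfin : (tri a b ∩ tri a' b').Finite := by
    apply Set.Finite.inter_of_left
    exact (Set.finite_singleton _).insert _ |>.insert _
  calc 2 = ({u, v} : Set FareyV).ncard := (Set.ncard_pair huv).symm
    _ ≤ _ := Set.ncard_le_ncard hsub hfin

/-- The base triangle. -/
noncomputable def T0 : Set FareyV := tri (1, 0) (0, 1)

lemma uni_base : uni ((1 : ℤ), (0 : ℤ)) (0, 1) := by unfold uni; norm_num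

lemma mem_tri_left {a b : ℤ × ℤ} : fv a ∈ tri a b := Set.mem_insert _ _
lemma mem_tri_mid {a b : ℤ × ℤ} : fv b ∈ tri a b := by
  simp [tri, Set.mem_insert_iff]
lemma mem_tri_right {a b : ℤ × ℤ} : fv (a + b) ∈ tri a b := by
  simp [tri, Set.mem_insert_iff]

lemma shrink {a b : ℤ × ℤ} (hab : uni a b)
    (hbig : a.1 ^ 2 + a.2 ^ 2 < 2 * |a.1 * b.1 + a.2 * b.2|) :
    ∃ b' : ℤ × ℤ, uni a b' ∧ b'.1 ^ 2 + b'.2 ^ 2 < b.1 ^ 2 + b.2 ^ 2 ∧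
      SharesEdgeStep (tri a b) (tri a b') := by
  have ha2 : 0 ≤ a.1 ^ 2 + a.2 ^ 2 := by positivity
  rcases lt_or_ge 0 (a.1 * b.1 + a.2 * b.2) with hpos | hneg
  · refine ⟨b - a, ?_, ?_, ?_⟩
    · unfold uni at *
      simp only [Prod.fst_sub, Prod.snd_sub]
      linear_combination hab
    · rw [abs_of_pos hpos] at hbig
      simp only [Prod.fst_sub, Prod.snd_sub]
      nlinarith [hbig]
    · have hab' : uni a (b - a) := by
        unfold uni at *
        simp only [Prod.fst_sub, Prod.snd_sub]
        linear_combination hab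
      refine step_of hab hab' hab.ne mem_tri_left mem_tri_mid mem_tri_left ?_
      have := mem_tri_right (a := a) (b := b - a)
      rwa [show a + (b - a) = b by ring] at this
  · have hneg' : a.1 * b.1 + a.2 * b.2 < 0 := by
      rcases lt_or_eq_of_le hneg with h | h
      · exact h
      · exfalso; rw [h, abs_zero] at hbig; linarith
    refine ⟨b + a, ?_, ?_, ?_⟩
    · unfold uni at *
      simp only [Prod.fst_add, Prod.snd_add]
      linear_combination hab
    · rw [abs_of_neg hneg'] at hbig
      simp only [Prod.fst_add, Prod.snd_add]
      nlinarith [hbig]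
    · have hab' : uni a (b + a) := by
        unfold uni at *
        simp only [Prod.fst_add, Prod.snd_add]
        linear_combination hab
      refine step_of hab hab' hab.addR.ne mem_tri_left mem_tri_right mem_tri_left ?_
      show fv (a + b) ∈ tri a (b + a)
      rw [add_comm b a]
      exact mem_tri_mid

lemma unit_vec {v : ℤ × ℤ} (h : v.1 ^ 2 + v.2 ^ 2 = 1) :
    v = (1, 0) ∨ v = (-1, 0) ∨ v = (0, 1) ∨ v = (0, -1) := by
  obtain ⟨x, y⟩ := v
  simp only [Prod.mk.injEq] at h ⊢
  have hx1 : x ≤ 1 := by nlinarith [sq_nonneg (x - 1), sq_nonneg y]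
  have hx2 : -1 ≤ x := by nlinarith [sq_nonneg (x + 1), sq_nonneg y]
  have hy1 : y ≤ 1 := by nlinarith [sq_nonneg (y - 1), sq_nonneg x]
  have hy2 : -1 ≤ y := by nlinarith [sq_nonneg (y + 1), sq_nonneg x]
  have hx : x = -1 ∨ x = 0 ∨ x = 1 := by omega
  have hy : y = -1 ∨ y = 0 ∨ y = 1 := by omega
  rcases hx with rfl | rfl | rfl <;> rcases hy with rfl | rfl | rfl <;> norm_num at h <;> norm_num

lemma fvE1 : fv ((-1 : ℤ), (0 : ℤ)) = fv (1, 0) := by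
  rw [show ((-1 : ℤ), (0 : ℤ)) = -((1 : ℤ), (0 : ℤ)) by norm_num [Prod.ext_iff]]
  exact fv_neg isCoprime_one_left

lemma fvE2 : fv ((0 : ℤ), (-1 : ℤ)) = fv (0, 1) := by
  rw [show ((0 : ℤ), (-1 : ℤ)) = -((0 : ℤ), (1 : ℤ)) by norm_num [Prod.ext_iff]]
  exact fv_neg isCoprime_one_right

lemma fvE3 : fv ((-1 : ℤ), (1 : ℤ)) = fv (1, -1) := by
  rw [show ((-1 : ℤ), (1 : ℤ)) = -((1 : ℤ), (-1 : ℤ)) by norm_num [Prod.ext_iff]]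
  exact fv_neg isCoprime_one_left

lemma fvE4 : fv ((-1 : ℤ), (-1 : ℤ)) = fv (1, 1) := by
  rw [show ((-1 : ℤ), (-1 : ℤ)) = -((1 : ℤ), (1 : ℤ)) by norm_num [Prod.ext_iff]]
  exact fv_neg isCoprime_one_left

lemma uni_S2 : uni ((1 : ℤ), (0 : ℤ)) (0, -1) := by unfold uni; norm_num

/-- The other base triangle, sharing an edge with `T0`. -/
lemma S2_step : Relation.ReflTransGen SharesEdgeStep (tri ((1 : ℤ), (0 : ℤ)) (0, -1)) T0 := by
  refine Relation.ReflTransGen.single ?_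
  refine step_of uni_S2 uni_base uni_base.ne mem_tri_left ?_ mem_tri_left mem_tri_mid
  have := mem_tri_mid (a := ((1 : ℤ), (0 : ℤ))) (b := ((0 : ℤ), (-1 : ℤ)))
  rwa [fvE2] at this

lemma triA : tri ((-1 : ℤ), (0 : ℤ)) ((0 : ℤ), (1 : ℤ)) = tri ((1 : ℤ), (0 : ℤ)) (0, -1) := by
  unfold tri
  rw [show ((-1 : ℤ), (0 : ℤ)) + ((0 : ℤ), (1 : ℤ)) = ((-1 : ℤ), (1 : ℤ)) from by
        norm_num [Prod.ext_iff],
      show ((1 : ℤ), (0 : ℤ)) + ((0 : ℤ), (-1 : ℤ)) = ((1 : ℤ), (-1 : ℤ)) from by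
        norm_num [Prod.ext_iff],
      fvE1, fvE2, fvE3]

lemma triB : tri ((-1 : ℤ), (0 : ℤ)) ((0 : ℤ), (-1 : ℤ)) = T0 := by
  unfold T0 tri
  rw [show ((-1 : ℤ), (0 : ℤ)) + ((0 : ℤ), (-1 : ℤ)) = ((-1 : ℤ), (-1 : ℤ)) from by
        norm_num [Prod.ext_iff],
      show ((1 : ℤ), (0 : ℤ)) + ((0 : ℤ), (1 : ℤ)) = ((1 : ℤ), (1 : ℤ)) from by
        norm_num [Prod.ext_iff],
      fvE1, fvE2, fvE4]

lemma sum_sq_pos {a b : ℤ × ℤ} (hab : uni a b) :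
    1 ≤ a.1 ^ 2 + a.2 ^ 2 + b.1 ^ 2 + b.2 ^ 2 := by
  by_contra h
  push_neg at h
  have ha1 : a.1 = 0 := by
    have h0 : a.1 ^ 2 ≤ 0 := by nlinarith [sq_nonneg a.2, sq_nonneg b.1, sq_nonneg b.2]
    exact sq_eq_zero_iff.mp (le_antisymm h0 (sq_nonneg _))
  have ha2 : a.2 = 0 := by
    have h0 : a.2 ^ 2 ≤ 0 := by nlinarith [sq_nonneg a.1, sq_nonneg b.1, sq_nonneg b.2]
    exact sq_eq_zero_iff.mp (le_antisymm h0 (sq_nonneg _))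
  unfold uni at hab
  rw [ha1, ha2] at hab
  norm_num at hab

lemma reach_base : ∀ n : ℕ, ∀ a b : ℤ × ℤ, uni a b →
    a.1 ^ 2 + a.2 ^ 2 + b.1 ^ 2 + b.2 ^ 2 ≤ (n : ℤ) →
    Relation.ReflTransGen SharesEdgeStep (tri a b) T0 := by
  intro n
  induction n using Nat.strong_induction_on with
  | _ n IH =>
  intro a b hab hn
  by_cases hred : 2 * |a.1 * b.1 + a.2 * b.2| ≤ a.1 ^ 2 + a.2 ^ 2 ∧
      2 * |a.1 * b.1 + a.2 * b.2| ≤ b.1 ^ 2 + b.2 ^ 2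
  · -- base case : a and b are orthogonal unit vectors
    obtain ⟨h1, h2⟩ := hred
    have lagrange : (a.1 * b.2 - a.2 * b.1) ^ 2 + (a.1 * b.1 + a.2 * b.2) ^ 2
        = (a.1 ^ 2 + a.2 ^ 2) * (b.1 ^ 2 + b.2 ^ 2) := by ring
    have hp0 : a.1 * b.1 + a.2 * b.2 = 0 := by
      by_contra hne
      have h1' : 1 ≤ |a.1 * b.1 + a.2 * b.2| := Int.one_le_abs hne
      have hmul : (2 * |a.1 * b.1 + a.2 * b.2|) * (2 * |a.1 * b.1 + a.2 * b.2|)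
          ≤ (a.1 ^ 2 + a.2 ^ 2) * (b.1 ^ 2 + b.2 ^ 2) :=
        mul_le_mul h1 h2 (by positivity) (by positivity)
      have habs2 : |a.1 * b.1 + a.2 * b.2| * |a.1 * b.1 + a.2 * b.2|
          = (a.1 * b.1 + a.2 * b.2) ^ 2 := by
        rw [abs_mul_abs_self]; ring
      have hqq : 1 ≤ (a.1 * b.1 + a.2 * b.2) ^ 2 := by
        rw [← habs2]
        nlinarith [h1', abs_nonneg (a.1 * b.1 + a.2 * b.2)]
      have h4 : 4 * (a.1 * b.1 + a.2 * b.2) ^ 2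
          ≤ (a.1 ^ 2 + a.2 ^ 2) * (b.1 ^ 2 + b.2 ^ 2) := by
        calc 4 * (a.1 * b.1 + a.2 * b.2) ^ 2
            = (2 * |a.1 * b.1 + a.2 * b.2|) * (2 * |a.1 * b.1 + a.2 * b.2|) := by
              rw [show (2 * |a.1 * b.1 + a.2 * b.2|) * (2 * |a.1 * b.1 + a.2 * b.2|)
                = 4 * (|a.1 * b.1 + a.2 * b.2| * |a.1 * b.1 + a.2 * b.2|) by ring, habs2]
          _ ≤ _ := hmul
      have hab' : (a.1 * b.2 - a.2 * b.1) ^ 2 = 1 := hab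
      linarith [lagrange, hab', hqq, h4]
    have hAB : (a.1 ^ 2 + a.2 ^ 2) * (b.1 ^ 2 + b.2 ^ 2) = 1 := by
      rw [← lagrange, hab, hp0]; ring
    have hA : a.1 ^ 2 + a.2 ^ 2 = 1 :=
      Int.eq_one_of_mul_eq_one_right (by positivity) hAB
    have hB : b.1 ^ 2 + b.2 ^ 2 = 1 :=
      Int.eq_one_of_mul_eq_one_left (by positivity) hAB
    have ha4 := unit_vec hA
    have hb4 := unit_vec hB
    clear hn h1 h2 lagrange hp0 hAB hA hB IH
    rcases ha4 with rfl | rfl | rfl | rfl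
    · rcases hb4 with rfl | rfl | rfl | rfl
      · exfalso; unfold uni at hab; norm_num at hab
      · exfalso; unfold uni at hab; norm_num at hab
      · exact Relation.ReflTransGen.refl
      · exact S2_step
    · rcases hb4 with rfl | rfl | rfl | rfl
      · exfalso; unfold uni at hab; norm_num at hab
      · exfalso; unfold uni at hab; norm_num at hab
      · rw [triA]; exact S2_step
      · rw [triB]
    · rcases hb4 with rfl | rfl | rfl | rfl
      · rw [tri_comm]; exact Relation.ReflTransGen.refl
      · rw [tri_comm, triA]; exact S2_step
      · exfalso; unfold uni at hab; norm_num at hab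
      · exfalso; unfold uni at hab; norm_num at hab
    · rcases hb4 with rfl | rfl | rfl | rfl
      · rw [tri_comm]
        exact S2_step
      · rw [tri_comm, triB]
      · exfalso; unfold uni at hab; norm_num at hab
      · exfalso; unfold uni at hab; norm_num at hab
  · push_neg at hred
    have hn1 : 1 ≤ n := by
      have h1 := sum_sq_pos hab
      have : (1 : ℤ) ≤ (n : ℤ) := le_trans h1 hn
      exact_mod_cast this
    have hcast : ((n - 1 : ℕ) : ℤ) = (n : ℤ) - 1 := by omega
    rcases le_or_gt (a.1 ^ 2 + a.2 ^ 2) (b.1 ^ 2 + b.2 ^ 2) with hle | hlt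
    · have hbig : a.1 ^ 2 + a.2 ^ 2 < 2 * |a.1 * b.1 + a.2 * b.2| := by
        rcases le_or_gt (2 * |a.1 * b.1 + a.2 * b.2|) (a.1 ^ 2 + a.2 ^ 2) with h | h
        · linarith [hred h]
        · exact h
      obtain ⟨b', hu', hlt', hstep⟩ := shrink hab hbig
      refine Relation.ReflTransGen.head hstep (IH (n - 1) (by omega) a b' hu' ?_)
      rw [hcast]
      linarith
    · rw [tri_comm]
      have hba : uni b a := hab.symm
      have hbig : b.1 ^ 2 + b.2 ^ 2 < 2 * |b.1 * a.1 + b.2 * a.2| := by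
        rw [show b.1 * a.1 + b.2 * a.2 = a.1 * b.1 + a.2 * b.2 by ring]
        rcases le_or_gt (2 * |a.1 * b.1 + a.2 * b.2|) (b.1 ^ 2 + b.2 ^ 2) with h | h
        · linarith [hred (by linarith)]
        · exact h
      obtain ⟨a', hu', hlt', hstep⟩ := shrink hba hbig
      refine Relation.ReflTransGen.head hstep (IH (n - 1) (by omega) b a' hu' ?_)
      rw [hcast]
      linarith

lemma uni_of_adj {a b : ℤ × ℤ} (ha : IsCoprime a.1 a.2) (hb : IsCoprime b.1 b.2)
    (h : FareyGraph.Adj (fv a) (fv b)) : uni a b := by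
  have h' : FareyAdj (fv a) (fv b) := h
  obtain ⟨hne, a', b', ha', hb', habs⟩ := h'
  have h1 : a'.val = a ∨ a'.val = -a := by
    have : (⟦a'⟧ : FareyV) = ⟦(⟨a, ha⟩ : FareyPre)⟧ := ha'.trans (fv_mk a ha)
    exact Quotient.eq.mp this
  have h2 : b'.val = b ∨ b'.val = -b := by
    have : (⟦b'⟧ : FareyV) = ⟦(⟨b, hb⟩ : FareyPre)⟧ := hb'.trans (fv_mk b hb)
    exact Quotient.eq.mp this
  have hd : (a'.val.1 * b'.val.2 - a'.val.2 * b'.val.1) ^ 2 = 1 := by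
    rw [← sq_abs, habs]; norm_num
  rcases h1 with h1 | h1 <;> rcases h2 with h2 | h2 <;> rw [h1, h2] at hd <;>
    unfold uni <;>
    (try simp only [Prod.fst_neg, Prod.snd_neg] at hd) <;>
    linear_combination hd

lemma triangle_eq_tri {t : Set FareyV} (ht : IsFareyTriangle t) :
    ∃ a b : ℤ × ℤ, uni a b ∧ t = tri a b := by
  obtain ⟨hcard, hadj⟩ := ht
  obtain ⟨u, v, w, huv, huw, hvw, rfl⟩ := Set.ncard_eq_three.mp hcard
  obtain ⟨x, hx⟩ := Quotient.exists_rep u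
  obtain ⟨y, hy⟩ := Quotient.exists_rep v
  obtain ⟨z, hz⟩ := Quotient.exists_rep w
  have hfx : fv x.val = u := by rw [fv_mk x.val x.2]; exact hx
  have hfy : fv y.val = v := by rw [fv_mk y.val y.2]; exact hy
  have hfz : fv z.val = w := by rw [fv_mk z.val z.2]; exact hz
  set a := x.val with hav
  set b := y.val with hbv
  set c := z.val with hcv
  have hab : uni a b := uni_of_adj x.2 y.2
    (by rw [hfx, hfy]; exact hadj u (by simp) v (by simp) huv)
  have hac : uni a c := uni_of_adj x.2 z.2
    (by rw [hfx, hfz]; exact hadj u (by simp) w (by simp) huw)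
  have hbc : uni b c := uni_of_adj y.2 z.2
    (by rw [hfy, hfz]; exact hadj v (by simp) w (by simp) hvw)
  have hD : (a.1 * b.2 - a.2 * b.1) ^ 2 = 1 := hab
  have hBC : (b.1 * c.2 - b.2 * c.1) ^ 2 = 1 := hbc
  have hAC : (a.1 * c.2 - a.2 * c.1) ^ 2 = 1 := hac
  have hX : (c.1 * b.2 - c.2 * b.1) * (a.1 * b.2 - a.2 * b.1) = 1 ∨
      (c.1 * b.2 - c.2 * b.1) * (a.1 * b.2 - a.2 * b.1) = -1 := by
    apply int_sq_one
    linear_combination (a.1 * b.2 - a.2 * b.1) ^ 2 * hBC + hD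
  have hY : (a.1 * c.2 - a.2 * c.1) * (a.1 * b.2 - a.2 * b.1) = 1 ∨
      (a.1 * c.2 - a.2 * c.1) * (a.1 * b.2 - a.2 * b.1) = -1 := by
    apply int_sq_one
    linear_combination (a.1 * b.2 - a.2 * b.1) ^ 2 * hAC + hD
  have hc1 : c.1 = ((c.1 * b.2 - c.2 * b.1) * (a.1 * b.2 - a.2 * b.1)) * a.1
      + ((a.1 * c.2 - a.2 * c.1) * (a.1 * b.2 - a.2 * b.1)) * b.1 := by
    linear_combination (-c.1) * hD
  have hc2 : c.2 = ((c.1 * b.2 - c.2 * b.1) * (a.1 * b.2 - a.2 * b.1)) * a.2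
      + ((a.1 * c.2 - a.2 * c.1) * (a.1 * b.2 - a.2 * b.1)) * b.2 := by
    linear_combination (-c.2) * hD
  rw [← hfx, ← hfy, ← hfz]
  rcases hX with hX | hX <;> rcases hY with hY | hY <;> rw [hX, hY] at hc1 hc2
  · refine ⟨a, b, hab, ?_⟩
    have hcsum : c = a + b := by
      refine Prod.ext_iff.mpr ⟨?_, ?_⟩ <;>
        simp only [Prod.fst_add, Prod.snd_add] <;> linarith [hc1, hc2]
    unfold tri
    rw [← hcsum]
  · refine ⟨a, -b, hab.neB, ?_⟩
    have hcsum : c = a + -b := by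
      refine Prod.ext_iff.mpr ⟨?_, ?_⟩ <;>
        simp only [Prod.fst_add, Prod.snd_add, Prod.fst_neg, Prod.snd_neg] <;>
        linarith [hc1, hc2]
    unfold tri
    rw [fv_neg y.2, ← hcsum]
  · refine ⟨-a, b, hab.neA, ?_⟩
    have hcsum : c = -a + b := by
      refine Prod.ext_iff.mpr ⟨?_, ?_⟩ <;>
        simp only [Prod.fst_add, Prod.snd_add, Prod.fst_neg, Prod.snd_neg] <;>
        linarith [hc1, hc2]
    unfold tri
    rw [fv_neg x.2, ← hcsum]
  · refine ⟨-a, -b, hab.neA.neB, ?_⟩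
    have hcsum : c = -a + -b := by
      refine Prod.ext_iff.mpr ⟨?_, ?_⟩ <;>
        simp only [Prod.fst_add, Prod.snd_add, Prod.fst_neg, Prod.snd_neg] <;>
        linarith [hc1, hc2]
    unfold tri
    rw [fv_neg x.2, fv_neg y.2, ← hcsum]

end FareyAux

lemma sharesEdgeStep_symm {s t : Set FareyV} (h : SharesEdgeStep s t) :
    SharesEdgeStep t s := ⟨h.2.1, h.1, by rw [Set.inter_comm]; exact h.2.2⟩

lemma rtg_symm {s t : Set FareyV} (h : Relation.ReflTransGen SharesEdgeStep s t) :
    Relation.ReflTransGen SharesEdgeStep t s := by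
  induction h with
  | refl => exact Relation.ReflTransGen.refl
  | tail _ h2 ih => exact Relation.ReflTransGen.head (sharesEdgeStep_symm h2) ih

/-- the Farey graph is chain-connected through triangles: any two
triangles are joined by a finite sequence of triangles in which consecutive
triangles share an edge. -/
theorem farey_triangle_chain_connected (s t : Set FareyV)
    (hs : IsFareyTriangle s) (ht : IsFareyTriangle t) :
    Relation.ReflTransGen SharesEdgeStep s t := by
  classical
  obtain ⟨a, b, hab, rfl⟩ := FareyAux.triangle_eq_tri hs
  obtain ⟨c, d, hcd, rfl⟩ := FareyAux.triangle_eq_tri ht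
  have h1 := FareyAux.reach_base (a.1^2+a.2^2+b.1^2+b.2^2).toNat a b hab
    (Int.self_le_toNat _)
  have h2 := FareyAux.reach_base (c.1^2+c.2^2+d.1^2+d.2^2).toNat c d hcd
    (Int.self_le_toNat _)
  exact h1.trans (rtg_symm h2)
end

section
/- If P, Q, R are the vertices of a triangle in the pants graph of S, then the three corresponding pants decompositions share a common set of n-1 curves, where n is the number of curves in a pants decomposition; i.e., P, Q, R are of the form {α₁, α₂, ..., αₙ}, {α₁', α₂, ..., αₙ}, {α₁'', α₂, ..., αₙ}. -/
/-!
If a curve `c` shared by `P` and `Q` were missing from `R`, it would be the only curve of `P`,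
and also the only curve of `Q`, not in `R`. Then `R` would contain both curves exchanged
between `P` and `Q`, which intersect: impossible in a pants decomposition. Hence
`P ∩ Q ⊆ R`, and `P ∩ Q ∩ R = P ∩ Q` has `n - 1` curves.
-/

open scoped Classical

/-- An abstract model of the pants graph data of a surface `S`: the isotopy
classes of essential non-peripheral simple closed curves with geometric
intersection number, the number `n = 3g - 3 + r` of curves in a pants
decomposition, and the predicate of being a pants decomposition. -/
structure PantsGraphModel where
  Curve : Type
  inter : Curve → Curve → ℕ
  inter_symm : ∀ a b, inter a b = inter b a
  n : ℕ
  IsPants : Finset Curve → Prop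
  pants_card : ∀ P, IsPants P → P.card = n
  pants_disjoint : ∀ P, IsPants P → ∀ a ∈ P, ∀ b ∈ P, a ≠ b → inter a b = 0

/-- An elementary move between two pants decompositions: they share `n - 1`
curves and the two exchanged curves intersect (minimally). This is the edge
relation of the pants graph. -/
def ElemMove (M : PantsGraphModel) (P Q : Finset M.Curve) : Prop :=
  M.IsPants P ∧ M.IsPants Q ∧ P ≠ Q ∧ (P ∩ Q).card = M.n - 1 ∧
    ∀ a ∈ P \ Q, ∀ b ∈ Q \ P, 0 < M.inter a b

theorem Finset.mem_of_card_sdiff_le_one {α : Type*} [DecidableEq α] {s t : Finset α} {c x : α}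
    (h : (s \ t).card ≤ 1) (hc : c ∈ s \ t) (hx : x ∈ s) (hxc : x ≠ c) : x ∈ t := by
  by_contra hxt
  exact hxc (Finset.card_le_one.mp h x (Finset.mem_sdiff.mpr ⟨hx, hxt⟩) c hc)

namespace ElemMove

variable {M : PantsGraphModel} {P Q R : Finset M.Curve}

theorem symm (h : ElemMove M P Q) : ElemMove M Q P := by
  obtain ⟨hP, hQ, hne, hcard, hinter⟩ := h
  refine ⟨hQ, hP, hne.symm, Finset.inter_comm P Q ▸ hcard, fun a ha b hb => ?_⟩
  rw [M.inter_symm]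
  exact hinter b hb a ha

theorem card_sdiff_le_one (h : ElemMove M P Q) : (P \ Q).card ≤ 1 := by
  have hsplit := Finset.card_sdiff_add_card_inter P Q
  rw [M.pants_card P h.1, h.2.2.2.1] at hsplit
  omega

theorem sdiff_nonempty (h : ElemMove M P Q) : (P \ Q).Nonempty := by
  rw [Finset.nonempty_iff_ne_empty, Ne, Finset.sdiff_eq_empty_iff_subset]
  intro hPQ
  refine h.2.2.1 (Finset.eq_of_subset_of_card_le hPQ ?_)
  rw [M.pants_card P h.1, M.pants_card Q h.2.1]

theorem notMem_of_mem_of_isPants (h : ElemMove M P Q) (hR : M.IsPants R) {a b : M.Curve}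
    (ha : a ∈ P \ Q) (hb : b ∈ Q \ P) (haR : a ∈ R) : b ∉ R := by
  intro hbR
  have hab : a ≠ b := fun hab => (Finset.mem_sdiff.mp ha).2 (hab ▸ (Finset.mem_sdiff.mp hb).1)
  have hdisjoint := M.pants_disjoint R hR a haR b hbR hab
  have hpos := h.2.2.2.2 a ha b hb
  omega

end ElemMove

/-- if `P`, `Q`, `R` are the vertices of a triangle in the pants
graph, then the three pants decompositions share a common set of `n - 1`
curves, i.e. they are of the form `{α₁, α₂, …, αₙ}`, `{α₁', α₂, …, αₙ}`,
`{α₁'', α₂, …, αₙ}`. -/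
theorem pants_triangle_common_curves (M : PantsGraphModel)
    (P Q R : Finset M.Curve)
    (hPQ : ElemMove M P Q) (hQR : ElemMove M Q R) (hPR : ElemMove M P R) :
    (P ∩ Q ∩ R).card = M.n - 1 := by
  have hsub : P ∩ Q ⊆ R := by
    intro c hc
    by_contra hcR
    obtain ⟨hcP, hcQ⟩ := Finset.mem_inter.mp hc
    obtain ⟨a, ha⟩ := hPQ.sdiff_nonempty
    obtain ⟨b, hb⟩ := hPQ.symm.sdiff_nonempty
    have haR : a ∈ R := Finset.mem_of_card_sdiff_le_one hPR.card_sdiff_le_one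
      (Finset.mem_sdiff.mpr ⟨hcP, hcR⟩) (Finset.mem_sdiff.mp ha).1
      (fun hac => (Finset.mem_sdiff.mp ha).2 (hac ▸ hcQ))
    have hbR : b ∈ R := Finset.mem_of_card_sdiff_le_one hQR.card_sdiff_le_one
      (Finset.mem_sdiff.mpr ⟨hcQ, hcR⟩) (Finset.mem_sdiff.mp hb).1
      (fun hbc => (Finset.mem_sdiff.mp hb).2 (hbc ▸ hcP))
    exact hPQ.notMem_of_mem_of_isPants hQR.2.1 ha hb haR hbR
  rw [Finset.inter_eq_left.mpr hsub, hPQ.2.2.2.1]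
end

section
/- Two vertices v and w of the curve complex of Σ_{0,5} are connected by an edge if and only if the associated Farey graphs F_v and F_w in the pants graph of Σ_{0,5} intersect, in which case they intersect in exactly one vertex. -/
open scoped Classical

/-- An abstract model of the isotopy classes of essential non-peripheral
simple closed curves on the five-times punctured sphere `Σ_{0,5}`, with the
geometric intersection number. -/
structure Sigma05Curves where
  Curve : Type
  inter : Curve → Curve → ℕ
  inter_symm : ∀ a b, inter a b = inter b a

/-- A pants decomposition of `Σ_{0,5}`: a pair of disjoint non-isotopic
curves. -/
def IsPD (M : Sigma05Curves) (P : Finset M.Curve) : Prop :=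
  P.card = 2 ∧ ∀ a ∈ P, ∀ b ∈ P, a ≠ b → M.inter a b = 0

/-- The Farey graph `F_v` in the pants graph associated to a curve `α`
(a vertex `v` of the curve complex): the set of all pants decompositions
containing `α`. -/
def FareyOf (M : Sigma05Curves) (α : M.Curve) : Set (Finset M.Curve) :=
  {P | IsPD M P ∧ α ∈ P}

section

variable {M : Sigma05Curves} {α β : M.Curve}

theorem isPD_pair_iff (hne : α ≠ β) : IsPD M {α, β} ↔ M.inter α β = 0 := by
  simp only [IsPD, Finset.card_pair hne, Finset.mem_insert, Finset.mem_singleton,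
    true_and]
  constructor
  · intro h
    exact h α (Or.inl rfl) β (Or.inr rfl) hne
  · rintro h a (rfl | rfl) b (rfl | rfl) hab
    · exact absurd rfl hab
    · exact h
    · rwa [M.inter_symm]
    · exact absurd rfl hab

theorem eq_pair_of_isPD_of_mem (hne : α ≠ β) {P : Finset M.Curve} (hP : IsPD M P)
    (hα : α ∈ P) (hβ : β ∈ P) : P = {α, β} :=
  (Finset.eq_of_subset_of_card_le (Finset.insert_subset hα (Finset.singleton_subset_iff.2 hβ))
    (by rw [hP.1, Finset.card_pair hne])).symm

theorem mem_fareyOf_inter_iff (hne : α ≠ β) {P : Finset M.Curve} :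
    P ∈ FareyOf M α ∩ FareyOf M β ↔ P = {α, β} ∧ M.inter α β = 0 := by
  constructor
  · rintro ⟨⟨hP, hα⟩, -, hβ⟩
    obtain rfl := eq_pair_of_isPD_of_mem hne hP hα hβ
    exact ⟨rfl, (isPD_pair_iff hne).1 hP⟩
  · rintro ⟨rfl, h⟩
    have hP := (isPD_pair_iff hne).2 h
    exact ⟨⟨hP, by simp⟩, hP, by simp⟩

end

/-- two vertices `v`, `w` of the curve complex of `Σ_{0,5}`
(curves `α ≠ β`) are joined by an edge (i.e. `α` and `β` are disjoint) iff the
associated Farey graphs `F_v`, `F_w` of the pants graph intersect; and in that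
case they intersect in exactly one vertex. -/
theorem sigma05_farey_intersection (M : Sigma05Curves) (α β : M.Curve)
    (hne : α ≠ β) :
    (M.inter α β = 0 ↔ (FareyOf M α ∩ FareyOf M β).Nonempty) ∧
      (M.inter α β = 0 →
        ∃! P : Finset M.Curve, P ∈ FareyOf M α ∩ FareyOf M β) := by
  refine ⟨⟨fun h => ⟨_, (mem_fareyOf_inter_iff hne).2 ⟨rfl, h⟩⟩, ?_⟩, fun h => ?_⟩
  · rintro ⟨P, hP⟩
    exact ((mem_fareyOf_inter_iff hne).1 hP).2
  · exact ⟨{α, β}, (mem_fareyOf_inter_iff hne).2 ⟨rfl, h⟩,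
      fun P hP => ((mem_fareyOf_inter_iff hne).1 hP).1⟩
end
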